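/- arXiv:1206.4107 — 5 statements merged into one kernel-verified Lean document; each statement's English description precedes it below -/
import Mathlib

section
/- Every equivalence class of Turyn-type sequences TT(n) contains at least one member which is in canonical form. -/
/-- A sequence is modeled as a function `ℤ → ℤ`. -/
abbrev BSeq : Type := ℤ → ℤ

/-- A quadruple of sequences. -/
abbrev SeqQuad : Type := BSeq × BSeq × BSeq × BSeq

/-- A binary (`±1`) sequence of length `n`: supported on `[1, n]`,
with values in `{1, -1}` there, and `0` outside. -/
def IsBinarySeq (n : ℕ) (a : BSeq) : Prop :=
  (∀ i : ℤ, 1 ≤ i → i ≤ (n : ℤ) → a i = 1 ∨ a i = -1) ∧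
  (∀ i : ℤ, i < 1 ∨ (n : ℤ) < i → a i = 0)

/-- The nonperiodic autocorrelation function `N_A(i) = Σ_{j ∈ ℤ} a_j a_{i+j}`. -/
noncomputable def NAC (a : BSeq) (i : ℤ) : ℤ := ∑ᶠ j : ℤ, a j * a (i + j)

/-- `(A; B; C; D)` is a Turyn-type sequence `TT(n)`: binary sequences of lengths
`n, n, n, n-1` with `N_A(i) + N_B(i) + 2N_C(i) + 2N_D(i) = 0` for all `i ≠ 0`. -/
def IsTT (n : ℕ) (A B C D : BSeq) : Prop :=
  IsBinarySeq n A ∧ IsBinarySeq n B ∧ IsBinarySeq n C ∧ IsBinarySeq (n - 1) D ∧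
  ∀ i : ℤ, i ≠ 0 → NAC A i + NAC B i + 2 * NAC C i + 2 * NAC D i = 0

/-- The negated sequence `-A`. -/
def negSeq (a : BSeq) : BSeq := fun i => -a i

/-- The reversed sequence `A'` of a sequence of length `n`. -/
def revSeq (n : ℕ) (a : BSeq) : BSeq := fun i => a ((n : ℤ) + 1 - i)

/-- The alternated sequence `A*`, whose `i`-th entry is `(-1)^(i-1) a_i`. -/
def altSeq (a : BSeq) : BSeq := fun i => if Even i then -a i else a i

/-- The elementary transformations of a quadruple `(A; B; C; D)` (with `A, B, C`
of length `n` and `D` of length `n-1`). -/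
inductive ElemStep (n : ℕ) : SeqQuad → SeqQuad → Prop
  | negA (A B C D : BSeq) : ElemStep n (A, B, C, D) (negSeq A, B, C, D)
  | negB (A B C D : BSeq) : ElemStep n (A, B, C, D) (A, negSeq B, C, D)
  | negC (A B C D : BSeq) : ElemStep n (A, B, C, D) (A, B, negSeq C, D)
  | negD (A B C D : BSeq) : ElemStep n (A, B, C, D) (A, B, C, negSeq D)
  | revA (A B C D : BSeq) : ElemStep n (A, B, C, D) (revSeq n A, B, C, D)
  | revB (A B C D : BSeq) : ElemStep n (A, B, C, D) (A, revSeq n B, C, D)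
  | revC (A B C D : BSeq) : ElemStep n (A, B, C, D) (A, B, revSeq n C, D)
  | revD (A B C D : BSeq) : ElemStep n (A, B, C, D) (A, B, C, revSeq (n - 1) D)
  | alt (A B C D : BSeq) : ElemStep n (A, B, C, D) (altSeq A, altSeq B, altSeq C, altSeq D)
  | swap (A B C D : BSeq) : ElemStep n (A, B, C, D) (B, A, C, D)

/-- Two quadruples are equivalent if one can be transformed into the other by a
finite sequence of elementary transformations. -/
def TTEquiv (n : ℕ) : SeqQuad → SeqQuad → Prop := Relation.ReflTransGen (ElemStep n)

/-- The canonical form of a Turyn-type sequence `TT(n)`. -/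
def IsCanonical (n : ℕ) (A B C D : BSeq) : Prop :=
  -- (i)
  (A 1 = 1 ∧ A (n : ℤ) = 1 ∧ B 1 = 1 ∧ B (n : ℤ) = 1 ∧ C 1 = 1 ∧
    (2 ≤ n → D 1 = 1)) ∧
  -- (ii)
  (∀ i : ℤ, 1 ≤ i → i ≤ (n : ℤ) → A i ≠ A ((n : ℤ) + 1 - i) →
    (∀ j : ℤ, 1 ≤ j → j < i → A j = A ((n : ℤ) + 1 - j)) → A i = 1) ∧
  -- (iii)
  (∀ i : ℤ, 1 ≤ i → i ≤ (n : ℤ) → B i ≠ B ((n : ℤ) + 1 - i) →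
    (∀ j : ℤ, 1 ≤ j → j < i → B j = B ((n : ℤ) + 1 - j)) → B i = 1) ∧
  -- (iv)
  (∀ i : ℤ, 1 ≤ i → i ≤ (n : ℤ) → C i = C ((n : ℤ) + 1 - i) →
    (∀ j : ℤ, 1 ≤ j → j < i → C j ≠ C ((n : ℤ) + 1 - j)) → C i = 1) ∧
  -- (v)
  (∀ i : ℤ, 1 ≤ i → i ≤ (n : ℤ) - 1 → D i * D ((n : ℤ) - i) ≠ D ((n : ℤ) - 1) →
    (∀ j : ℤ, 1 ≤ j → j < i → D j * D ((n : ℤ) - j) = D ((n : ℤ) - 1)) → D i = 1) ∧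
  -- (vi)
  (2 < n → A 2 ≠ B 2 → A 2 = 1) ∧
  (2 < n → A 2 = B 2 → A ((n : ℤ) - 1) = 1 ∧ B ((n : ℤ) - 1) = -1)


/-!
The equation of a `TT(n)` at shift `n - 1` reads `a₁aₙ + b₁bₙ + 2c₁cₙ = 0`, so `a₁aₙ = b₁bₙ`;
reducing the equations at shifts `1` and `n - 1` mod `4` shows that `n` is even when `n ≥ 2`, so an
alternation makes `a₁aₙ = b₁bₙ = 1`. Conditions (ii)–(v) each concern a single sequence: they ask
for a `1` at the first index where some symmetry of that sequence fails. After a negation making its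
first entry `1`, the sequence and a suitably signed reversal of it have the same first entry (and
last, for `A` and `B`) and the same symmetry failures, but opposite signs there, so one of the two
satisfies the condition.
Finally the equation at shift `n - 2` forces `a_{n-1} = -b_{n-1}` when `a₂ = b₂`, so (vi) holds
after possibly interchanging `A` and `B`.
-/

open Relation

lemma NAC_eq_sum {n : ℕ} {a : BSeq} (ha : IsBinarySeq n a) (i : ℤ) :
    NAC a i = ∑ j ∈ Finset.Icc 1 ((n : ℤ) - i), a j * a (i + j) := by
  refine finsum_eq_sum_of_support_subset _ fun j hj => ?_
  rw [Function.mem_support] at hj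
  rw [Finset.coe_Icc, Set.mem_Icc]
  by_contra hout
  rcases not_and_or.mp hout with hj1 | hj2
  · exact hj (by rw [ha.2 j (Or.inl (by omega)), zero_mul])
  · exact hj (by rw [ha.2 (i + j) (Or.inr (by omega)), mul_zero])

lemma NAC_eq_zero_of_le {n : ℕ} {a : BSeq} (ha : IsBinarySeq n a) {i : ℤ} (hi : n ≤ i) :
    NAC a i = 0 := by
  rw [NAC_eq_sum ha, Finset.Icc_eq_empty (by omega), Finset.sum_empty]

lemma NAC_sub_one {n : ℕ} {a : BSeq} (ha : IsBinarySeq n a) :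
    NAC a ((n : ℤ) - 1) = a 1 * a n := by
  rw [NAC_eq_sum ha, sub_sub_cancel, Finset.Icc_self, Finset.sum_singleton, sub_add_cancel]

lemma NAC_sub_two {n : ℕ} {a : BSeq} (ha : IsBinarySeq n a) :
    NAC a ((n : ℤ) - 2) = a 1 * a ((n : ℤ) - 1) + a 2 * a n := by
  rw [NAC_eq_sum ha, sub_sub_cancel, show Finset.Icc (1 : ℤ) 2 = {1, 2} by decide,
    Finset.sum_pair (by norm_num)]
  ring_nf

lemma NAC_negSeq (a : BSeq) (i : ℤ) : NAC (negSeq a) i = NAC a i :=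
  finsum_congr fun _ => neg_mul_neg _ _

lemma NAC_revSeq (m : ℕ) (a : BSeq) (i : ℤ) : NAC (revSeq m a) i = NAC a i := by
  rw [NAC, ← finsum_comp_equiv (Equiv.subLeft ((m : ℤ) + 1 - i))]
  refine finsum_congr fun j => ?_
  simp only [Equiv.subLeft_apply, revSeq]
  rw [mul_comm]
  ring_nf

lemma altSeq_mul_altSeq (a : BSeq) (i j : ℤ) :
    altSeq a j * altSeq a (i + j) = (if Even i then 1 else -1) * (a j * a (i + j)) := by
  by_cases hi : Even i <;> by_cases hj : Even j <;>
    simp [altSeq, hi, hj, Int.even_add]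

lemma NAC_altSeq (a : BSeq) (i : ℤ) :
    NAC (altSeq a) i = (if Even i then 1 else -1) * NAC a i := by
  simp only [NAC, altSeq_mul_altSeq]
  split_ifs
  · simp only [one_mul]
  · simp only [neg_one_mul, finsum_neg_distrib]

lemma two_dvd_NAC_sub {n : ℕ} {a : BSeq} (ha : IsBinarySeq n a) {i : ℤ} (hi : 0 ≤ i)
    (hin : i ≤ n) : 2 ∣ NAC a i - (n - i) := by
  have hcard : ((Finset.Icc 1 ((n : ℤ) - i)).card : ℤ) = n - i := by
    rw [Int.card_Icc, Int.toNat_of_nonneg (by omega)]; ring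
  have hsum : NAC a i - (n - i) = ∑ j ∈ Finset.Icc 1 ((n : ℤ) - i), (a j * a (i + j) - 1) := by
    rw [Finset.sum_sub_distrib, Finset.sum_const, nsmul_one, hcard, NAC_eq_sum ha]
  rw [hsum]
  refine Finset.dvd_sum fun j hj => ?_
  rw [Finset.mem_Icc] at hj
  rcases ha.1 j hj.1 (by omega) with h | h <;>
    rcases ha.1 (i + j) (by omega) (by omega) with h' | h' <;> simp [h, h']

/-- The neighbour products `a_j a_{j+1}` together with the wrap-around product `a_1 a_n` multiply
to `1`, so an even number of them are `-1`. -/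
lemma four_dvd_sum_mul_succ_add_sub {a : BSeq} {n : ℕ} (hn : 1 ≤ n)
    (ha : ∀ k : ℤ, 1 ≤ k → k ≤ n → a k = 1 ∨ a k = -1) :
    4 ∣ ∑ j ∈ Finset.Icc 1 ((n : ℤ) - 1), a j * a (j + 1) + a 1 * a n - n := by
  induction n, hn using Nat.le_induction with
  | base =>
    rcases ha 1 le_rfl le_rfl with h | h <;> simp [h]
  | succ n hn ih =>
    have hIcc : Finset.Icc 1 ((n + 1 : ℕ) - 1 : ℤ) =
        insert (n : ℤ) (Finset.Icc 1 ((n : ℤ) - 1)) := by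
      ext x; simp only [Finset.mem_Icc, Finset.mem_insert]; omega
    rw [hIcc, Finset.sum_insert (by simp)]
    have ih := ih fun k hk1 hkn => ha k hk1 (by omega)
    have h1 := ha 1 le_rfl (by omega)
    have hn' := ha n (by omega) (by omega)
    have hn1 := ha (n + 1) (by omega) (by omega)
    push_cast at ih ⊢
    rcases h1 with h1 | h1 <;> rcases hn' with h2 | h2 <;> rcases hn1 with h3 | h3 <;>
      simp only [h1, h2, h3] at ih ⊢ <;> omega

lemma four_dvd_NAC_one_add_NAC_sub_one {n : ℕ} {a : BSeq} (ha : IsBinarySeq n a) (hn : 1 ≤ n) :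
    4 ∣ NAC a 1 + NAC a ((n : ℤ) - 1) - n := by
  rw [NAC_sub_one ha, NAC_eq_sum ha]
  simp only [add_comm (1 : ℤ)]
  exact four_dvd_sum_mul_succ_add_sub hn ha.1

namespace IsBinarySeq

variable {n : ℕ} {a : BSeq}

lemma negSeq (ha : IsBinarySeq n a) : IsBinarySeq n (negSeq a) :=
  ⟨fun i h1 h2 => by rcases ha.1 i h1 h2 with h | h <;> simp [_root_.negSeq, h],
    fun i h => by simp [_root_.negSeq, ha.2 i h]⟩

lemma revSeq (ha : IsBinarySeq n a) : IsBinarySeq n (revSeq n a) :=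
  ⟨fun _ _ _ => ha.1 _ (by omega) (by omega), fun _ _ => ha.2 _ (by omega)⟩

lemma altSeq (ha : IsBinarySeq n a) : IsBinarySeq n (altSeq a) :=
  ⟨fun i h1 h2 => by
    rcases ha.1 i h1 h2 with h | h <;> by_cases he : Even i <;> simp [_root_.altSeq, he, h],
    fun i h => by by_cases he : Even i <;> simp [_root_.altSeq, he, ha.2 i h]⟩

lemma mul_apply (ha : IsBinarySeq n a) {i j : ℤ} (hi1 : 1 ≤ i) (hin : i ≤ n) (hj1 : 1 ≤ j)
    (hjn : j ≤ n) : a i * a j = 1 ∨ a i * a j = -1 :=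
  Int.isUnit_iff.mp <|
    (Int.isUnit_iff.mpr (ha.1 i hi1 hin)).mul (Int.isUnit_iff.mpr (ha.1 j hj1 hjn))

end IsBinarySeq

lemma isTT_of_elemStep {n : ℕ} {q p : SeqQuad} (hs : ElemStep n q p)
    (h : IsTT n q.1 q.2.1 q.2.2.1 q.2.2.2) : IsTT n p.1 p.2.1 p.2.2.1 p.2.2.2 := by
  obtain ⟨hA, hB, hC, hD, hN⟩ := h
  cases hs with
  | negA => exact ⟨hA.negSeq, hB, hC, hD, by simpa only [NAC_negSeq] using hN⟩
  | negB => exact ⟨hA, hB.negSeq, hC, hD, by simpa only [NAC_negSeq] using hN⟩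
  | negC => exact ⟨hA, hB, hC.negSeq, hD, by simpa only [NAC_negSeq] using hN⟩
  | negD => exact ⟨hA, hB, hC, hD.negSeq, by simpa only [NAC_negSeq] using hN⟩
  | revA => exact ⟨hA.revSeq, hB, hC, hD, by simpa only [NAC_revSeq] using hN⟩
  | revB => exact ⟨hA, hB.revSeq, hC, hD, by simpa only [NAC_revSeq] using hN⟩
  | revC => exact ⟨hA, hB, hC.revSeq, hD, by simpa only [NAC_revSeq] using hN⟩
  | revD => exact ⟨hA, hB, hC, hD.revSeq, by simpa only [NAC_revSeq] using hN⟩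
  | alt =>
    refine ⟨hA.altSeq, hB.altSeq, hC.altSeq, hD.altSeq, fun i hi => ?_⟩
    simp only [NAC_altSeq]
    linear_combination (if Even i then 1 else -1 : ℤ) * hN i hi
  | swap => exact ⟨hB, hA, hC, hD, fun i hi => by linear_combination hN i hi⟩

lemma IsTT.of_ttEquiv {n : ℕ} {q p : SeqQuad} (he : TTEquiv n q p)
    (h : IsTT n q.1 q.2.1 q.2.2.1 q.2.2.2) : IsTT n p.1 p.2.1 p.2.2.1 p.2.2.2 := by
  induction he with
  | refl => exact h
  | tail _ hs ih => exact isTT_of_elemStep hs ih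

namespace IsTT

variable {n : ℕ} {A B C D : BSeq}

/-- Adding the defining equations at `1` and `n - 1` and reducing mod `4` leaves `2n ≡ 0`. -/
lemma even (h : IsTT n A B C D) (hn : 2 ≤ n) : Even n := by
  obtain ⟨hA, hB, hC, hD, hN⟩ := h
  have hA4 := four_dvd_NAC_one_add_NAC_sub_one hA (by omega)
  have hB4 := four_dvd_NAC_one_add_NAC_sub_one hB (by omega)
  have hC4 := four_dvd_NAC_one_add_NAC_sub_one hC (by omega)
  have hD2 := two_dvd_NAC_sub hD (i := 1) (by omega) (by omega)
  have hDlast := NAC_eq_zero_of_le hD (i := (n : ℤ) - 1) (by omega)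
  have h1 := hN 1 one_ne_zero
  have hlast := hN ((n : ℤ) - 1) (by omega)
  have : ((n - 1 : ℕ) : ℤ) = n - 1 := by omega
  rw [this] at hD2
  rw [Nat.even_iff]
  omega

lemma ends_eq (h : IsTT n A B C D) (hn : 2 ≤ n) : A 1 * A n = B 1 * B n := by
  obtain ⟨hA, hB, hC, hD, hN⟩ := h
  have hlast := hN ((n : ℤ) - 1) (by omega)
  rw [NAC_sub_one hA, NAC_sub_one hB, NAC_sub_one hC,
    NAC_eq_zero_of_le hD (by omega)] at hlast
  have := hA.mul_apply le_rfl (by omega) (by omega) le_rfl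
  have := hB.mul_apply le_rfl (by omega) (by omega) le_rfl
  have := hC.mul_apply le_rfl (by omega) (by omega) le_rfl
  omega

lemma apply_sub_one_eq_neg (h : IsTT n A B C D) (hn : 2 < n) (hA1 : A 1 = 1) (hAn : A n = 1)
    (hB1 : B 1 = 1) (hBn : B n = 1) (hAB : A 2 = B 2) : A ((n : ℤ) - 1) = -B ((n : ℤ) - 1) := by
  obtain ⟨hA, hB, hC, hD, hN⟩ := h
  have hE := hN ((n : ℤ) - 2) (by omega)
  have hDlast := NAC_sub_one hD
  have hm : ((n - 1 : ℕ) : ℤ) = n - 1 := by omega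
  rw [hm, sub_sub, one_add_one_eq_two] at hDlast
  rw [NAC_sub_two hA, NAC_sub_two hB, NAC_sub_two hC, hDlast, hA1, hAn, hB1, hBn, hAB] at hE
  have := hA.1 ((n : ℤ) - 1) (by omega) (by omega)
  have := hB.1 ((n : ℤ) - 1) (by omega) (by omega)
  have := hB.1 2 (by omega) (by omega)
  have := hC.mul_apply (i := 1) (j := (n : ℤ) - 1) le_rfl (by omega) (by omega) (by omega)
  have := hC.mul_apply (i := 2) (by omega) (by omega) (by omega) le_rfl
  have := hD.mul_apply (i := 1) (j := (n : ℤ) - 1) le_rfl (by omega) (by omega) (by omega)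
  omega

end IsTT

lemma altSeq_one_mul_altSeq {n : ℕ} (a : BSeq) (hn : Even n) :
    altSeq a 1 * altSeq a n = -(a 1 * a n) := by
  have hn' : Even (n : ℤ) := (Int.even_coe_nat n).mpr hn
  simp [altSeq, hn']

/-- For `n ≥ 2` the length is even and `a_1 a_n = b_1 b_n`, so one alternation makes both `1`. -/
lemma exists_ttEquiv_ends_eq_one {n : ℕ} {A B C D : BSeq} (hn : 1 ≤ n) (h : IsTT n A B C D) :
    ∃ A' B' C' D' : BSeq, TTEquiv n (A, B, C, D) (A', B', C', D') ∧ IsTT n A' B' C' D' ∧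
      A' 1 * A' n = 1 ∧ B' 1 * B' n = 1 := by
  rcases hn.eq_or_lt with rfl | hn2
  · refine ⟨A, B, C, D, .refl, h, ?_, ?_⟩
    · rcases h.1.1 1 le_rfl le_rfl with h1 | h1 <;> simp [h1]
    · rcases h.2.1.1 1 le_rfl le_rfl with h1 | h1 <;> simp [h1]
  have hends := h.ends_eq hn2
  rcases h.1.mul_apply le_rfl (by omega) (by omega) le_rfl with hA | hA
  · exact ⟨A, B, C, D, .refl, h, hA, hends ▸ hA⟩
  · have heven := h.even hn2
    refine ⟨_, _, _, _, .single (.alt A B C D), isTT_of_elemStep (.alt A B C D) h, ?_, ?_⟩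
    · rw [altSeq_one_mul_altSeq A heven, hA, neg_neg]
    · rw [altSeq_one_mul_altSeq B heven, ← hends, hA, neg_neg]

/-- Conditions (ii)–(v) of the canonical form all have this shape. -/
def OneAtFirstFailure (m : ℤ) (Q : ℤ → Prop) (X : BSeq) : Prop :=
  ∀ i : ℤ, 1 ≤ i → i ≤ m → ¬ Q i → (∀ j : ℤ, 1 ≤ j → j < i → Q j) → X i = 1

namespace OneAtFirstFailure

variable {m : ℤ} {Q Q' : ℤ → Prop} {X Y : BSeq}

lemma congr (h : OneAtFirstFailure m Q X) (hQ : ∀ i, 1 ≤ i → i ≤ m → (Q i ↔ Q' i)) :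
    OneAtFirstFailure m Q' X := fun i hi1 him hi hj =>
  h i hi1 him (by rwa [hQ i hi1 him]) fun j hj1 hji => (hQ j hj1 (by omega)).2 (hj j hj1 hji)

lemma of_not_one (hQ : ¬ Q 1) (hX : X 1 = 1) : OneAtFirstFailure m Q X := by
  intro i hi1 _ _ hj
  obtain rfl | hi1 := hi1.eq_or_lt
  · exact hX
  · exact absurd (hj 1 le_rfl hi1) hQ

lemma or_of_eq_neg (hX : ∀ i, 1 ≤ i → i ≤ m → X i = 1 ∨ X i = -1)
    (hY : ∀ i, 1 ≤ i → i ≤ m → ¬ Q i → Y i = -X i) :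
    OneAtFirstFailure m Q X ∨ OneAtFirstFailure m Q Y := by
  by_cases hfail : ∃ i, 1 ≤ i ∧ i ≤ m ∧ ¬ Q i
  · obtain ⟨i₀, ⟨hi₀1, hi₀m, hi₀⟩, hmin⟩ :=
      Int.exists_least_of_bdd ⟨1, fun _ hz => hz.1⟩ hfail
    have huniq : ∀ i, 1 ≤ i → i ≤ m → ¬ Q i → (∀ j, 1 ≤ j → j < i → Q j) → i = i₀ :=
      fun i hi1 him hi hj => le_antisymm
        (not_lt.mp fun hlt => hi₀ (hj i₀ hi₀1 hlt)) (hmin i ⟨hi1, him, hi⟩)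
    rcases hX i₀ hi₀1 hi₀m with h | h
    · exact .inl fun i hi1 him hi hj => huniq i hi1 him hi hj ▸ h
    · refine .inr fun i hi1 him hi hj => ?_
      rw [huniq i hi1 him hi hj, hY i₀ hi₀1 hi₀m hi₀, h, neg_neg]
  · push Not at hfail
    exact .inl fun i hi1 him hi _ => absurd (hfail i hi1 him) hi

end OneAtFirstFailure

def NegRevEquiv (n : ℕ) : BSeq → BSeq → Prop :=
  ReflTransGen fun X Y => Y = negSeq X ∨ Y = revSeq n X

namespace NegRevEquiv

variable {n : ℕ} {X Y A B C D : BSeq}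

lemma ttEquiv_A (h : NegRevEquiv n X Y) : TTEquiv n (X, B, C, D) (Y, B, C, D) :=
  h.lift (fun X => (X, B, C, D)) fun _ _ h => by
    rcases h with rfl | rfl
    exacts [.negA .., .revA ..]

lemma ttEquiv_B (h : NegRevEquiv n X Y) : TTEquiv n (A, X, C, D) (A, Y, C, D) :=
  h.lift (fun X => (A, X, C, D)) fun _ _ h => by
    rcases h with rfl | rfl
    exacts [.negB .., .revB ..]

lemma ttEquiv_C (h : NegRevEquiv n X Y) : TTEquiv n (A, B, X, D) (A, B, Y, D) :=
  h.lift (fun X => (A, B, X, D)) fun _ _ h => by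
    rcases h with rfl | rfl
    exacts [.negC .., .revC ..]

lemma ttEquiv_D (h : NegRevEquiv (n - 1) X Y) : TTEquiv n (A, B, C, X) (A, B, C, Y) :=
  h.lift (fun X => (A, B, C, X)) fun _ _ h => by
    rcases h with rfl | rfl
    exacts [.negD .., .revD ..]

end NegRevEquiv

lemma revSeq_revSeq (n : ℕ) (X : BSeq) : revSeq n (revSeq n X) = X :=
  funext fun i => by simp only [revSeq, sub_sub_cancel]

lemma exists_negRevEquiv_oneAtFirstFailure {n : ℕ} {m : ℤ} {P : BSeq → Prop}
    (Q : BSeq → ℤ → Prop) {X Z : BSeq} (hX : ∀ i, 1 ≤ i → i ≤ m → X i = 1 ∨ X i = -1)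
    (hXZ : NegRevEquiv n X Z) (hPX : P X) (hPZ : P Z) (hQ : ∀ i, 1 ≤ i → i ≤ m → (Q X i ↔ Q Z i))
    (hZ : ∀ i, 1 ≤ i → i ≤ m → ¬ Q X i → Z i = -X i) :
    ∃ Y, NegRevEquiv n X Y ∧ P Y ∧ OneAtFirstFailure m (Q Y) Y := by
  rcases OneAtFirstFailure.or_of_eq_neg hX hZ with h | h
  · exact ⟨X, .refl, hPX, h⟩
  · exact ⟨Z, hXZ, hPZ, h.congr hQ⟩

/-- The parts of conditions (i)–(v) that concern a single sequence; `D` has length `m = n - 1`. -/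
def IsNormalizedAB (n : ℕ) (X : BSeq) : Prop :=
  (X 1 = 1 ∧ X n = 1) ∧ OneAtFirstFailure n (fun i => X i = revSeq n X i) X

def IsNormalizedC (n : ℕ) (X : BSeq) : Prop :=
  X 1 = 1 ∧ OneAtFirstFailure n (fun i => X i ≠ revSeq n X i) X

def IsNormalizedD (m : ℕ) (X : BSeq) : Prop :=
  (1 ≤ m → X 1 = 1) ∧ OneAtFirstFailure m (fun i => X i * revSeq m X i = X m) X

section Normalize

variable {n m : ℕ} {X : BSeq}

lemma exists_normalizedAB_of_apply_one (hX : IsBinarySeq n X) (h1 : X 1 = 1) (hn : X n = 1) :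
    ∃ Y, NegRevEquiv n X Y ∧ IsNormalizedAB n Y := by
  refine exists_negRevEquiv_oneAtFirstFailure (P := fun Y => Y 1 = 1 ∧ Y n = 1)
    (fun Y i => Y i = revSeq n Y i) hX.1 (.single (.inr rfl)) ⟨h1, hn⟩ ?_ ?_ ?_
  · simp [revSeq, h1, hn]
  · intro i _ _
    rw [revSeq_revSeq, eq_comm]
  · intro i hi1 hin hi
    have := hX.1 i hi1 hin
    have := hX.revSeq.1 i hi1 hin
    omega

lemma exists_normalizedC_of_apply_one (hn : 1 ≤ n) (hX : IsBinarySeq n X) (h1 : X 1 = 1) :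
    ∃ Y, NegRevEquiv n X Y ∧ IsNormalizedC n Y := by
  rcases hX.1 n (by omega) le_rfl with hXn | hXn
  · exact ⟨X, .refl, h1, .of_not_one (by simp [revSeq, h1, hXn]) h1⟩
  refine exists_negRevEquiv_oneAtFirstFailure (P := fun Y => Y 1 = 1)
    (fun Y i => Y i ≠ revSeq n Y i) hX.1 (.tail (.single (.inr rfl)) (.inl rfl)) h1 ?_ ?_ ?_
  · simp [negSeq, revSeq, hXn]
  · intro i _ _
    simp only [negSeq, revSeq, sub_sub_cancel, ne_eq, neg_inj]
    exact not_congr eq_comm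
  · intro i _ _ hi
    simp only [ne_eq, not_not] at hi
    simp [negSeq, hi]

lemma exists_normalizedD_of_apply_one (hm : 1 ≤ m) (hX : IsBinarySeq m X) (h1 : X 1 = 1) :
    ∃ Y, NegRevEquiv m X Y ∧ IsNormalizedD m Y := by
  have hsign : ∀ i : ℤ, 1 ≤ i → i ≤ m →
      (X i = 1 ∨ X i = -1) ∧ (revSeq m X i = 1 ∨ revSeq m X i = -1) :=
    fun i hi1 him => ⟨hX.1 i hi1 him, hX.revSeq.1 i hi1 him⟩
  have hlast : revSeq m X m = 1 := by simp [revSeq, h1]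
  rcases hX.1 m (by omega) le_rfl with hXm | hXm
  · refine exists_negRevEquiv_oneAtFirstFailure (P := fun Y => 1 ≤ m → Y 1 = 1)
      (fun Y i => Y i * revSeq m Y i = Y m) hX.1 (.single (.inr rfl)) (fun _ => h1) ?_ ?_ ?_
    · simp [revSeq, hXm]
    · intro i _ _
      rw [revSeq_revSeq, hlast, hXm, mul_comm]
    · intro i hi1 him hi
      rw [hXm] at hi
      rcases hsign i hi1 him with ⟨h | h, h' | h'⟩ <;> simp_all
  · refine exists_negRevEquiv_oneAtFirstFailure (P := fun Y => 1 ≤ m → Y 1 = 1)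
      (fun Y i => Y i * revSeq m Y i = Y m) hX.1 (.tail (.single (.inr rfl)) (.inl rfl))
      (fun _ => h1) ?_ ?_ ?_
    · simp [negSeq, revSeq, hXm]
    · intro i _ _
      show _ ↔ -revSeq m X i * -revSeq m (revSeq m X) i = -revSeq m X m
      rw [revSeq_revSeq, hlast, neg_mul_neg, hXm, mul_comm]
    · intro i hi1 him hi
      rw [hXm] at hi
      rcases hsign i hi1 him with ⟨h | h, h' | h'⟩ <;> simp_all [negSeq]

lemma exists_negRevEquiv_of_apply_one {P : BSeq → Prop} (hn : 1 ≤ n)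
    (hX : IsBinarySeq n X) (H : ∀ X', IsBinarySeq n X' → X' 1 = 1 → X' 1 * X' n = X 1 * X n →
      ∃ Y, NegRevEquiv n X' Y ∧ P Y) :
    ∃ Y, NegRevEquiv n X Y ∧ P Y := by
  rcases hX.1 1 le_rfl (by omega) with h1 | h1
  · exact H X hX h1 rfl
  · obtain ⟨Y, hXY, hY⟩ := H _ hX.negSeq (by simp [negSeq, h1]) (neg_mul_neg _ _)
    exact ⟨Y, .head (.inl rfl) hXY, hY⟩

lemma exists_normalizedAB (hn : 1 ≤ n) (hX : IsBinarySeq n X)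
    (h : X 1 * X n = 1) : ∃ Y, NegRevEquiv n X Y ∧ IsNormalizedAB n Y :=
  exists_negRevEquiv_of_apply_one hn hX fun _ hX' h1 hends =>
    exists_normalizedAB_of_apply_one hX' h1 (by rwa [h1, one_mul, h] at hends)

lemma exists_normalizedC (hn : 1 ≤ n) (hX : IsBinarySeq n X) :
    ∃ Y, NegRevEquiv n X Y ∧ IsNormalizedC n Y :=
  exists_negRevEquiv_of_apply_one hn hX fun _ hX' h1 _ =>
    exists_normalizedC_of_apply_one hn hX' h1

lemma exists_normalizedD (hX : IsBinarySeq m X) :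
    ∃ Y, NegRevEquiv m X Y ∧ IsNormalizedD m Y := by
  rcases Nat.eq_zero_or_pos m with rfl | hm
  · exact ⟨X, .refl, by omega, fun _ _ _ => by omega⟩
  · exact exists_negRevEquiv_of_apply_one hm hX fun _ hX' h1 _ =>
      exists_normalizedD_of_apply_one hm hX' h1

end Normalize

section Canonical

variable {n : ℕ} {A B C D : BSeq}

lemma isCanonical_of_normalized (hn : 1 ≤ n) (hA : IsNormalizedAB n A) (hB : IsNormalizedAB n B)
    (hC : IsNormalizedC n C) (hD : IsNormalizedD (n - 1) D)
    (hAB : (2 < n → A 2 ≠ B 2 → A 2 = 1) ∧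
      (2 < n → A 2 = B 2 → A ((n : ℤ) - 1) = 1 ∧ B ((n : ℤ) - 1) = -1)) :
    IsCanonical n A B C D := by
  obtain ⟨⟨hA1, hAn⟩, hA⟩ := hA
  obtain ⟨⟨hB1, hBn⟩, hB⟩ := hB
  obtain ⟨hC1, hC⟩ := hC
  obtain ⟨hD1, hD⟩ := hD
  have hm : ((n - 1 : ℕ) : ℤ) = n - 1 := by omega
  refine ⟨⟨hA1, hAn, hB1, hBn, hC1, fun h2 => hD1 (by omega)⟩, hA, hB,
    fun i hi1 hin hi hj => hC i hi1 hin (not_not.mpr hi) hj, fun i hi1 hin hi hj => ?_, hAB⟩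
  refine hD i hi1 (by omega) (by simpa only [revSeq, hm, sub_add_cancel] using hi)
    fun j hj1 hji => ?_
  simpa only [revSeq, hm, sub_add_cancel] using hj j hj1 hji

lemma isCanonical_or_isCanonical_swap (hn : 1 ≤ n) (h : IsTT n A B C D)
    (hA : IsNormalizedAB n A) (hB : IsNormalizedAB n B) (hC : IsNormalizedC n C)
    (hD : IsNormalizedD (n - 1) D) : IsCanonical n A B C D ∨ IsCanonical n B A C D := by
  refine (?_ : _ ∨ _).imp (isCanonical_of_normalized hn hA hB hC hD)
    (isCanonical_of_normalized hn hB hA hC hD)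
  by_cases hn2 : 2 < n
  · have := h.1.1 2 (by omega) (by omega)
    have := h.2.1.1 2 (by omega) (by omega)
    have := h.1.1 ((n : ℤ) - 1) (by omega) (by omega)
    have := h.apply_sub_one_eq_neg hn2 hA.1.1 hA.1.2 hB.1.1 hB.1.2
    omega
  · omega

end Canonical

/-- Every equivalence class of Turyn-type sequences `TT(n)` contains at least one
member in canonical form. -/
theorem every_class_has_canonical_member (n : ℕ) (hn : 1 ≤ n) (A B C D : BSeq)
    (h : IsTT n A B C D) :
    ∃ A' B' C' D' : BSeq, TTEquiv n (A, B, C, D) (A', B', C', D') ∧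
      IsCanonical n A' B' C' D' := by
  obtain ⟨A₁, B₁, C₁, D₁, he₁, h₁, hA₁, hB₁⟩ := exists_ttEquiv_ends_eq_one hn h
  obtain ⟨A₂, hA, hA₂⟩ := exists_normalizedAB hn h₁.1 hA₁
  obtain ⟨B₂, hB, hB₂⟩ := exists_normalizedAB hn h₁.2.1 hB₁
  obtain ⟨C₂, hC, hC₂⟩ := exists_normalizedC hn h₁.2.2.1
  obtain ⟨D₂, hD, hD₂⟩ := exists_normalizedD h₁.2.2.2.1
  have he : TTEquiv n (A, B, C, D) (A₂, B₂, C₂, D₂) :=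
    he₁.trans <| hA.ttEquiv_A.trans <| hB.ttEquiv_B.trans <| hC.ttEquiv_C.trans hD.ttEquiv_D
  rcases isCanonical_or_isCanonical_swap hn (IsTT.of_ttEquiv he h) hA₂ hB₂ hC₂ hD₂ with hc | hc
  · exact ⟨A₂, B₂, C₂, D₂, he, hc⟩
  · exact ⟨B₂, A₂, C₂, D₂, he.tail (.swap ..), hc⟩
end

section
/- If (A;B;C;D) is a Turyn-type sequence TT(n) with n > 2, then exactly one of the two equalities a_2 = b_2 and a_{n−1} = b_{n−1} holds. -/
/-- If the shift `i` satisfies `m - 1 ≤ i` with `i ≠ 0` and terms vanish except `j = 1`,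
the autocorrelation reduces to a single term. -/
lemma NAC_single (a : BSeq) (i : ℤ) (hv : ∀ j : ℤ, j ≠ 1 → a j * a (i + j) = 0) :
    NAC a i = a 1 * a (i + 1) :=
  finsum_eq_single (fun j => a j * a (i + j)) 1 hv

lemma NAC_pair (a : BSeq) (i : ℤ) (hv : ∀ j : ℤ, j ≠ 1 → j ≠ 2 → a j * a (i + j) = 0) :
    NAC a i = a 1 * a (i + 1) + a 2 * a (i + 2) := by
  have hsub : Function.support (fun j : ℤ => a j * a (i + j)) ⊆ ({1, 2} : Finset ℤ) := by
    intro j hj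
    simp only [Function.mem_support] at hj
    simp only [Finset.coe_insert, Finset.coe_singleton, Set.mem_insert_iff,
      Set.mem_singleton_iff]
    by_contra hc
    push_neg at hc
    exact hj (hv j hc.1 hc.2)
  rw [NAC, finsum_eq_finset_sum_of_support_subset _ hsub]
  simp

lemma mulpm {x y : ℤ} (hx : x = 1 ∨ x = -1) (hy : y = 1 ∨ y = -1) :
    x * y = 1 ∨ x * y = -1 := by
  rcases hx with rfl | rfl <;> rcases hy with rfl | rfl <;> norm_num

lemma step1 {z w u : ℤ} (hz : z = 1 ∨ z = -1) (hw : w = 1 ∨ w = -1)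
    (hu : u = 1 ∨ u = -1) (e : z + w + 2 * u = 0) : z = w := by omega

lemma step2 {s1 s2 s3 s4 v1 v2 dd : ℤ}
    (h1 : s1 = 1 ∨ s1 = -1) (h2 : s2 = 1 ∨ s2 = -1) (h3 : s3 = 1 ∨ s3 = -1)
    (h4 : s4 = 1 ∨ s4 = -1) (h5 : v1 = 1 ∨ v1 = -1) (h6 : v2 = 1 ∨ v2 = -1)
    (h7 : dd = 1 ∨ dd = -1)
    (e : s1 + s2 + s3 + s4 + 2 * (v1 + v2) + 2 * dd = 0) :
    s1 * s2 * s3 * s4 = -1 := by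
  rcases h1 with rfl | rfl <;> rcases h2 with rfl | rfl <;> rcases h3 with rfl | rfl <;>
    rcases h4 with rfl | rfl <;> rcases h5 with rfl | rfl <;> rcases h6 with rfl | rfl <;>
    rcases h7 with rfl | rfl <;> omega

lemma step3 {p q r s : ℤ} (hp : p = 1 ∨ p = -1) (hq : q = 1 ∨ q = -1)
    (hr : r = 1 ∨ r = -1) (hs : s = 1 ∨ s = -1)
    (e : p * q * (r * s) = -1) : Xor' (p = q) (r = s) := by
  rcases hp with rfl | rfl <;> rcases hq with rfl | rfl <;> rcases hr with rfl | rfl <;>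
    rcases hs with rfl | rfl <;> simp_all [Xor'] <;> omega

/-- If `(A;B;C;D)` is a `TT(n)` with `n > 2`, then exactly one of the equalities
`a_2 = b_2` and `a_{n-1} = b_{n-1}` holds. -/
theorem exactly_one_equality (n : ℕ) (hn : 2 < n) (A B C D : BSeq)
    (h : IsTT n A B C D) :
    Xor' (A 2 = B 2) (A ((n : ℤ) - 1) = B ((n : ℤ) - 1)) := by
  obtain ⟨⟨hA1, hA0⟩, ⟨hB1, hB0⟩, ⟨hC1, hC0⟩, ⟨hD1, hD0⟩, heq⟩ := h
  have hn' : (2 : ℤ) < (n : ℤ) := by exact_mod_cast hn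
  have hcast : ((n - 1 : ℕ) : ℤ) = (n : ℤ) - 1 := by
    have : 1 ≤ n := by omega
    push_cast [this]; ring
  -- zero lemma packaged
  have zeroA : ∀ j : ℤ, j < 1 ∨ (n : ℤ) < j → A j = 0 := hA0
  -- values at i = n - 1 : only j = 1 contributes, for A, B, C; none for D
  have hNA1 : ∀ (X : BSeq), (∀ i : ℤ, i < 1 ∨ (n : ℤ) < i → X i = 0) →
      NAC X ((n : ℤ) - 1) = X 1 * X (n : ℤ) := by
    intro X hX0
    have := NAC_single X ((n : ℤ) - 1) (fun j hj => by
      rcases lt_or_ge j 1 with hlt | hge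
      · rw [hX0 j (Or.inl hlt), zero_mul]
      · have : (n : ℤ) < (n : ℤ) - 1 + j := by omega
        rw [hX0 _ (Or.inr this), mul_zero])
    rw [this]; ring_nf
  have hND1 : NAC D ((n : ℤ) - 1) = 0 := by
    rw [NAC, finsum_eq_zero_of_forall_eq_zero]
    intro j
    rcases lt_or_ge j 1 with hlt | hge
    · rw [hD0 j (Or.inl hlt), zero_mul]
    · have : ((n - 1 : ℕ) : ℤ) < (n : ℤ) - 1 + j := by omega
      rw [hD0 _ (Or.inr this), mul_zero]
  -- values at i = n - 2 : j ∈ {1, 2} for A, B, C; j = 1 for D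
  have hNA2 : ∀ (X : BSeq), (∀ i : ℤ, i < 1 ∨ (n : ℤ) < i → X i = 0) →
      NAC X ((n : ℤ) - 2) = X 1 * X ((n : ℤ) - 1) + X 2 * X (n : ℤ) := by
    intro X hX0
    have := NAC_pair X ((n : ℤ) - 2) (fun j hj1 hj2 => by
      rcases lt_or_ge j 1 with hlt | hge
      · rw [hX0 j (Or.inl hlt), zero_mul]
      · have hj : 3 ≤ j := by omega
        have : (n : ℤ) < (n : ℤ) - 2 + j := by omega
        rw [hX0 _ (Or.inr this), mul_zero])
    rw [this]; ring_nf
  have hND2 : NAC D ((n : ℤ) - 2) = D 1 * D ((n : ℤ) - 1) := by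
    have := NAC_single D ((n : ℤ) - 2) (fun j hj => by
      rcases lt_or_ge j 1 with hlt | hge
      · rw [hD0 j (Or.inl hlt), zero_mul]
      · have hj2 : 2 ≤ j := by omega
        have : ((n - 1 : ℕ) : ℤ) < (n : ℤ) - 2 + j := by omega
        rw [hD0 _ (Or.inr this), mul_zero])
    rw [this]; ring_nf
  -- the two equations
  have e1 := heq ((n : ℤ) - 1) (by omega)
  have e2 := heq ((n : ℤ) - 2) (by omega)
  rw [hNA1 A hA0, hNA1 B hB0, hNA1 C hC0, hND1] at e1
  rw [hNA2 A hA0, hNA2 B hB0, hNA2 C hC0, hND2] at e2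
  -- memberships
  have mA1 := hA1 1 (by omega) (by omega)
  have mA2 := hA1 2 (by omega) (by omega)
  have mAn1 := hA1 ((n : ℤ) - 1) (by omega) (by omega)
  have mAn := hA1 (n : ℤ) (by omega) (by omega)
  have mB1 := hB1 1 (by omega) (by omega)
  have mB2 := hB1 2 (by omega) (by omega)
  have mBn1 := hB1 ((n : ℤ) - 1) (by omega) (by omega)
  have mBn := hB1 (n : ℤ) (by omega) (by omega)
  have mC1 := hC1 1 (by omega) (by omega)
  have mC2 := hC1 2 (by omega) (by omega)
  have mCn1 := hC1 ((n : ℤ) - 1) (by omega) (by omega)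
  have mCn := hC1 (n : ℤ) (by omega) (by omega)
  have mD1 := hD1 1 (by omega) (by omega)
  have mDn1 := hD1 ((n : ℤ) - 1) (by omega) (by omega)
  -- step 1: A1*An = B1*Bn
  have hzw : A 1 * A (n : ℤ) = B 1 * B (n : ℤ) := by
    apply step1 (mulpm mA1 mAn) (mulpm mB1 mBn) (mulpm mC1 mCn)
    linarith [e1]
  -- step 2: product of the four cross terms is -1
  have hprod : (A 1 * A ((n:ℤ) - 1)) * (A 2 * A (n:ℤ)) * (B 1 * B ((n:ℤ) - 1)) *
      (B 2 * B (n:ℤ)) = -1 := by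
    apply step2 (mulpm mA1 mAn1) (mulpm mA2 mAn) (mulpm mB1 mBn1) (mulpm mB2 mBn)
      (mulpm mC1 mCn1) (mulpm mC2 mCn) (mulpm mD1 mDn1)
    linarith [e2]
  -- rewrite the product as (A2*B2)*(An1*Bn1) using hzw and squares
  have hsq : (B 1 * B (n : ℤ)) * (B 1 * B (n : ℤ)) = 1 := by
    rcases mulpm mB1 mBn with h' | h' <;> rw [h'] <;> norm_num
  have hkey : (A 2 * B 2) * (A ((n:ℤ) - 1) * B ((n:ℤ) - 1)) = -1 := by
    have : (A 1 * A ((n:ℤ) - 1)) * (A 2 * A (n:ℤ)) * (B 1 * B ((n:ℤ) - 1)) *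
        (B 2 * B (n:ℤ)) =
        ((B 1 * B (n:ℤ)) * (B 1 * B (n:ℤ))) *
        ((A 2 * B 2) * (A ((n:ℤ) - 1) * B ((n:ℤ) - 1))) := by
      linear_combination (A 2 * A ((n:ℤ) - 1) * B 2 * B ((n:ℤ) - 1) * B 1 * B (n:ℤ)) * hzw
    rw [this, hsq, one_mul] at hprod
    exact hprod
  exact step3 mA2 mB2 mAn1 mBn1 hkey
end

section
/- If (A;B;C;D) is a Turyn-type sequence TT(n), then (Σ_{i=1}^{n} a_i)² + (Σ_{i=1}^{n} b_i)² + 2(Σ_{i=1}^{n} c_i)² + 2(Σ_{i=1}^{n−1} d_i)² = 6n − 2; in particular 6n − 2 is a sum of six integer squares. -/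
lemma NAC_eq {n : ℕ} {a : BSeq} (h : IsBinarySeq n a) (i : ℤ) :
    NAC a i = ∑ j ∈ Finset.Icc (1 : ℤ) (n : ℤ), a j * a (i + j) := by
  apply finsum_eq_finset_sum_of_support_subset
  intro j hj
  simp only [Function.mem_support] at hj
  by_contra hmem
  rw [Finset.coe_Icc, Set.mem_Icc] at hmem
  exact hj (by rw [h.2 j (by omega), zero_mul])

lemma NAC_zero {n : ℕ} {a : BSeq} (h : IsBinarySeq n a) :
    NAC a 0 = (n : ℤ) := by
  rw [NAC_eq h]
  have : ∀ j ∈ Finset.Icc (1 : ℤ) (n : ℤ), a j * a (0 + j) = 1 := by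
    intro j hj
    rw [Finset.mem_Icc] at hj
    rcases h.1 j hj.1 hj.2 with h1 | h1 <;> simp [h1]
  rw [Finset.sum_congr rfl this, Finset.sum_const, Int.card_Icc]
  simp

lemma sq_sum_eq {n m : ℕ} {a : BSeq} (h : IsBinarySeq m a) (hmn : m ≤ n) :
    (∑ j ∈ Finset.Icc (1 : ℤ) (m : ℤ), a j) ^ 2 =
      ∑ i ∈ Finset.Icc (-(n : ℤ)) (n : ℤ), NAC a i := by
  have key : ∀ j ∈ Finset.Icc (1 : ℤ) (m : ℤ),
      ∑ i ∈ Finset.Icc (-(n : ℤ)) (n : ℤ), a (i + j) =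
      ∑ k ∈ Finset.Icc (1 : ℤ) (m : ℤ), a k := by
    intro j hj
    rw [Finset.mem_Icc] at hj
    have hm := Finset.sum_map (Finset.Icc (-(n : ℤ)) (n : ℤ)) (addRightEmbedding j) a
    rw [Finset.map_add_right_Icc] at hm
    simp only [addRightEmbedding_apply] at hm
    rw [← hm]
    symm
    apply Finset.sum_subset
    · intro k hk
      rw [Finset.mem_Icc] at hk ⊢
      have : (m : ℤ) ≤ (n : ℤ) := by exact_mod_cast hmn
      omega
    · intro k _ hk
      rw [Finset.mem_Icc] at hk
      exact h.2 k (by omega)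
  calc (∑ j ∈ Finset.Icc (1 : ℤ) (m : ℤ), a j) ^ 2
      = ∑ j ∈ Finset.Icc (1 : ℤ) (m : ℤ),
          a j * ∑ k ∈ Finset.Icc (1 : ℤ) (m : ℤ), a k := by
        rw [sq, Finset.sum_mul]
    _ = ∑ j ∈ Finset.Icc (1 : ℤ) (m : ℤ),
          ∑ i ∈ Finset.Icc (-(n : ℤ)) (n : ℤ), a j * a (i + j) := by
        refine Finset.sum_congr rfl fun j hj => ?_
        rw [← Finset.mul_sum, key j hj]
    _ = ∑ i ∈ Finset.Icc (-(n : ℤ)) (n : ℤ),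
          ∑ j ∈ Finset.Icc (1 : ℤ) (m : ℤ), a j * a (i + j) := Finset.sum_comm
    _ = _ := by
        refine Finset.sum_congr rfl fun i _ => ?_
        rw [NAC_eq h]

/-- For a `TT(n)`, the row sums satisfy
`(ΣA)² + (ΣB)² + 2(ΣC)² + 2(ΣD)² = 6n - 2`; in particular `6n - 2` is a sum of
six integer squares. -/
theorem sum_of_six_squares (n : ℕ) (hn : 1 ≤ n) (A B C D : BSeq)
    (h : IsTT n A B C D) :
    ((∑ i ∈ Finset.Icc (1 : ℤ) (n : ℤ), A i) ^ 2 +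
     (∑ i ∈ Finset.Icc (1 : ℤ) (n : ℤ), B i) ^ 2 +
     2 * (∑ i ∈ Finset.Icc (1 : ℤ) (n : ℤ), C i) ^ 2 +
     2 * (∑ i ∈ Finset.Icc (1 : ℤ) ((n : ℤ) - 1), D i) ^ 2 = 6 * (n : ℤ) - 2) ∧
    ∃ x₁ x₂ x₃ x₄ x₅ x₆ : ℤ,
      x₁ ^ 2 + x₂ ^ 2 + x₃ ^ 2 + x₄ ^ 2 + x₅ ^ 2 + x₆ ^ 2 = 6 * (n : ℤ) - 2 := by
  obtain ⟨hA, hB, hC, hD, hTT⟩ := h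
  have hcast : ((n - 1 : ℕ) : ℤ) = (n : ℤ) - 1 := by
    rw [Nat.cast_sub hn]; simp
  have main : (∑ i ∈ Finset.Icc (1 : ℤ) (n : ℤ), A i) ^ 2 +
     (∑ i ∈ Finset.Icc (1 : ℤ) (n : ℤ), B i) ^ 2 +
     2 * (∑ i ∈ Finset.Icc (1 : ℤ) (n : ℤ), C i) ^ 2 +
     2 * (∑ i ∈ Finset.Icc (1 : ℤ) ((n : ℤ) - 1), D i) ^ 2 = 6 * (n : ℤ) - 2 := by
    rw [← hcast, sq_sum_eq hA le_rfl, sq_sum_eq hB le_rfl, sq_sum_eq hC le_rfl,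
      sq_sum_eq hD (Nat.sub_le n 1), Finset.mul_sum, Finset.mul_sum]
    rw [← Finset.sum_add_distrib, ← Finset.sum_add_distrib, ← Finset.sum_add_distrib]
    rw [Finset.sum_eq_single_of_mem 0 (by rw [Finset.mem_Icc]; omega)
      (fun i _ hi => hTT i hi)]
    rw [NAC_zero hA, NAC_zero hB, NAC_zero hC, NAC_zero hD, hcast]
    ring
  refine ⟨main, ∑ i ∈ Finset.Icc (1 : ℤ) (n : ℤ), A i,
    ∑ i ∈ Finset.Icc (1 : ℤ) (n : ℤ), B i,
    ∑ i ∈ Finset.Icc (1 : ℤ) (n : ℤ), C i, ∑ i ∈ Finset.Icc (1 : ℤ) (n : ℤ), C i,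
    ∑ i ∈ Finset.Icc (1 : ℤ) ((n : ℤ) - 1), D i,
    ∑ i ∈ Finset.Icc (1 : ℤ) ((n : ℤ) - 1), D i, by rw [← main]; ring⟩
end

section
/- If (A;B;C;D) is a Turyn-type sequence TT(n), then (C,D; C,−D; A; B) are base sequences of lengths 2n−1, 2n−1, n, n, where comma denotes concatenation of sequences. -/
/-- Concatenation of a sequence of length `n` with another sequence. -/
def concatSeq (n : ℕ) (a b : BSeq) : BSeq := fun k => if k ≤ (n : ℤ) then a k else b (k - n)

/-- Base sequences of lengths `m, m, n, n`. -/
def IsBaseSeq (m n : ℕ) (A B C D : BSeq) : Prop :=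
  IsBinarySeq m A ∧ IsBinarySeq m B ∧ IsBinarySeq n C ∧ IsBinarySeq n D ∧
  ∀ i : ℤ, i ≠ 0 → NAC A i + NAC B i + NAC C i + NAC D i = 0

section aux

lemma supp_fin {n : ℕ} {a : BSeq} (h : ∀ i : ℤ, i < 1 ∨ (n:ℤ) < i → a i = 0) :
    (Function.support a).Finite := by
  apply (Set.finite_Icc (1:ℤ) n).subset
  intro x hx
  simp only [Function.mem_support] at hx
  by_contra hc
  exact hx (h x (by simp [Set.mem_Icc] at hc; omega))

lemma prod_supp_fin (a b : BSeq) (i : ℤ) (ha : (Function.support a).Finite) :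
    (Function.support (fun j => a j * b (i + j))).Finite := by
  apply ha.subset
  intro x hx
  simp only [Function.mem_support] at hx ⊢
  intro h0; exact hx (by rw [h0, zero_mul])

lemma NAC_add (a b : BSeq) (ha : (Function.support a).Finite)
    (hb : (Function.support b).Finite) (i : ℤ) :
    NAC (fun j => a j + b j) i = NAC a i + NAC b i
      + ((∑ᶠ j : ℤ, a j * b (i + j)) + ∑ᶠ j : ℤ, b j * a (i + j)) := by
  unfold NAC
  have haa := prod_supp_fin a a i ha
  have hbb := prod_supp_fin b b i hb
  have hab := prod_supp_fin a b i ha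
  have hba := prod_supp_fin b a i hb
  have h1 : (fun j => (a j + b j) * (a (i + j) + b (i + j)))
      = fun j => (a j * a (i + j) + b j * b (i + j))
        + (a j * b (i + j) + b j * a (i + j)) := by
    funext j; ring
  rw [h1, finsum_add_distrib ((haa.union hbb).subset (Function.support_add _ _))
      ((hab.union hba).subset (Function.support_add _ _)),
    finsum_add_distrib haa hbb, finsum_add_distrib hab hba]

lemma NAC_shift (a : BSeq) (c i : ℤ) :
    NAC (fun j => a (j - c)) i = NAC a i := by
  unfold NAC
  rw [← finsum_comp_equiv (Equiv.addRight c) (f := fun j => a (j - c) * a (i + j - c))]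
  apply finsum_congr; intro j
  simp only [Equiv.coe_addRight]
  ring_nf

end aux

/-- If `(A;B;C;D)` is a `TT(n)`, then `(C,D; C,-D; A; B)` are base sequences of
lengths `2n-1, 2n-1, n, n`. -/
theorem TT_gives_base_sequences (n : ℕ) (A B C D : BSeq) (h : IsTT n A B C D) :
    IsBaseSeq (2 * n - 1) n (concatSeq n C D) (concatSeq n C (negSeq D)) A B := by
  obtain ⟨hA, hB, hC, hD, hsum⟩ := h
  set Dsh : BSeq := fun j => D (j - (n : ℤ)) with hDshdef
  have hDsh0 : ∀ i : ℤ, i < 1 ∨ ((2 * n - 1 : ℕ) : ℤ) < i → Dsh i = 0 := by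
    intro i hi
    exact hD.2 _ (by omega)
  have hCfin := supp_fin hC.2
  have hDshfin := supp_fin hDsh0
  have hnegfin : (Function.support (fun j => -Dsh j)).Finite := by
    apply hDshfin.subset
    intro x hx
    simp only [Function.mem_support] at hx ⊢
    intro h0; exact hx (by rw [h0, neg_zero])
  have hE1 : concatSeq n C D = fun j => C j + Dsh j := by
    funext k
    simp only [concatSeq, hDshdef]
    split
    · rename_i hk
      rw [hD.2 (k - n) (Or.inl (by omega))]; ring
    · rename_i hk
      rw [hC.2 k (Or.inr (by omega))]; ring
  have hE2 : concatSeq n C (negSeq D) = fun j => C j + (-Dsh j) := by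
    funext k
    simp only [concatSeq, negSeq, hDshdef]
    split
    · rename_i hk
      rw [hD.2 (k - n) (Or.inl (by omega))]; ring
    · rename_i hk
      rw [hC.2 k (Or.inr (by omega))]; ring
  have hshift : ∀ i : ℤ, NAC Dsh i = NAC D i := fun i => NAC_shift D n i
  refine ⟨?_, ?_, hA, hB, ?_⟩
  · constructor
    · intro i h1 h2
      simp only [concatSeq]
      split
      · exact hC.1 i h1 (by assumption)
      · rename_i hk
        exact hD.1 (i - n) (by omega) (by omega)
    · intro i hi
      simp only [concatSeq]
      split
      · exact hC.2 i (by omega)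
      · rename_i hk
        exact hD.2 (i - n) (by omega)
  · constructor
    · intro i h1 h2
      simp only [concatSeq, negSeq]
      split
      · exact hC.1 i h1 (by assumption)
      · rename_i hk
        rcases hD.1 (i - n) (by omega) (by omega) with hv | hv
        · right; rw [hv]
        · left; rw [hv]; ring
    · intro i hi
      simp only [concatSeq, negSeq]
      split
      · exact hC.2 i (by omega)
      · rename_i hk
        rw [hD.2 (i - n) (by omega)]; ring
  · intro i hi
    have n1 : NAC (concatSeq n C D) i = NAC C i + NAC Dsh i
        + ((∑ᶠ j : ℤ, C j * Dsh (i + j)) + ∑ᶠ j : ℤ, Dsh j * C (i + j)) := by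
      rw [hE1]; exact NAC_add C Dsh hCfin hDshfin i
    have n2 : NAC (concatSeq n C (negSeq D)) i = NAC C i + NAC Dsh i
        - ((∑ᶠ j : ℤ, C j * Dsh (i + j)) + ∑ᶠ j : ℤ, Dsh j * C (i + j)) := by
      rw [hE2, NAC_add C (fun j => -Dsh j) hCfin hnegfin]
      have e1 : NAC (fun j => -Dsh j) i = NAC Dsh i := by
        unfold NAC; apply finsum_congr; intro j; ring
      have e2 : (∑ᶠ j : ℤ, C j * (-Dsh (i + j))) = -∑ᶠ j : ℤ, C j * Dsh (i + j) := by
        rw [← finsum_neg_distrib]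
        apply finsum_congr; intro j; ring
      have e3 : (∑ᶠ j : ℤ, (-Dsh j) * C (i + j)) = -∑ᶠ j : ℤ, Dsh j * C (i + j) := by
        rw [← finsum_neg_distrib]
        apply finsum_congr; intro j; ring
      rw [e1, e2, e3]; ring
    rw [n1, n2, hshift i]
    linarith [hsum i hi]
end

section
/- There exists a Turyn-type sequence TT(38); explicitly, the quadruple (A;B;C;D) with A = ++++−−+++++−+++−−−+−++−+++++−++−−−−−−+, B = +−+++−−−−++−+−++−−−−−−−−+−−−+++−+−++−+, C = +++−+−+++++−+++−+−−−−+++−+−−+−−+++−++−, D = +−−++−−−++−−++−+−−−−+−+−−−+−++++−+−−+ is a TT(38). -/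
/-- The sequence determined by a list, with `l.get (i-1)` in position `i` for
`1 ≤ i ≤ l.length` and `0` elsewhere. -/
def seqOfList (l : List ℤ) : BSeq := fun i => if 1 ≤ i then l.getD (i - 1).toNat 0 else 0

/-! A TT(38) is certified by evaluating its autocorrelations: a sequence supported on `[1, n]`
has `N(i) = Σ_{j=1}^{n} a_j a_{i+j}`, which vanishes for `|i| ≥ n`, so only the finitely many
shifts `0 < |i| < n` have to be checked, and these finite sums are decidable. -/

theorem seqOfList_eq_zero {l : List ℤ} {i : ℤ} (hi : i < 1 ∨ (l.length : ℤ) < i) :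
    seqOfList l i = 0 := by
  unfold seqOfList
  split
  · exact List.getD_eq_default _ _ (by omega)
  · rfl

theorem isBinarySeq_seqOfList {l : List ℤ} {n : ℕ} (hn : l.length = n)
    (hl : ∀ x ∈ l, x = 1 ∨ x = -1) : IsBinarySeq n (seqOfList l) := by
  subst hn
  refine ⟨fun i h1 h2 => ?_, fun i hi => seqOfList_eq_zero hi⟩
  have hlt : (i - 1).toNat < l.length := by omega
  rw [seqOfList, if_pos h1, List.getD_eq_getElem l 0 hlt]
  exact hl _ (List.getElem_mem hlt)

section Autocorrelation

variable {a : BSeq} {n : ℤ}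

theorem NAC_eq_sum_Icc (ha : ∀ j : ℤ, j < 1 ∨ n < j → a j = 0) (i : ℤ) :
    NAC a i = ∑ j ∈ Finset.Icc 1 n, a j * a (i + j) := by
  refine finsum_eq_finsetSum_of_support_subset _ fun j hj => ?_
  rw [Finset.coe_Icc, Set.mem_Icc]
  by_contra hj'
  exact hj (show a j * a (i + j) = 0 by rw [ha j (by omega), zero_mul])

theorem NAC_eq_zero_of_le_abs (ha : ∀ j : ℤ, j < 1 ∨ n < j → a j = 0) {i : ℤ} (hi : n ≤ |i|) :
    NAC a i = 0 := by
  rw [NAC_eq_sum_Icc ha]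
  refine Finset.sum_eq_zero fun j hj => ?_
  rw [Finset.mem_Icc] at hj
  rw [ha (i + j) (by cases abs_cases i <;> omega), mul_zero]

end Autocorrelation

theorem IsBinarySeq.eq_zero_of_lt_or_lt {n m : ℕ} {a : BSeq} (ha : IsBinarySeq n a) (hnm : n ≤ m)
    {i : ℤ} (hi : i < 1 ∨ (m : ℤ) < i) : a i = 0 :=
  ha.2 i (by omega)

theorem isTT_of_sum_Icc {n : ℕ} {A B C D : BSeq} (hA : IsBinarySeq n A) (hB : IsBinarySeq n B)
    (hC : IsBinarySeq n C) (hD : IsBinarySeq (n - 1) D)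
    (h : ∀ i ∈ Finset.Ioo (-(n : ℤ)) n, i ≠ 0 → ∑ j ∈ Finset.Icc 1 (n : ℤ),
      (A j * A (i + j) + B j * B (i + j) + 2 * (C j * C (i + j)) + 2 * (D j * D (i + j))) = 0) :
    IsTT n A B C D := by
  have hA0 := fun j => hA.eq_zero_of_lt_or_lt le_rfl (i := j)
  have hB0 := fun j => hB.eq_zero_of_lt_or_lt le_rfl (i := j)
  have hC0 := fun j => hC.eq_zero_of_lt_or_lt le_rfl (i := j)
  have hD0 := fun j => hD.eq_zero_of_lt_or_lt (n.sub_le 1) (i := j)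
  refine ⟨hA, hB, hC, hD, fun i hi => ?_⟩
  by_cases hin : (n : ℤ) ≤ |i|
  · simp only [NAC_eq_zero_of_le_abs hA0 hin, NAC_eq_zero_of_le_abs hB0 hin,
      NAC_eq_zero_of_le_abs hC0 hin, NAC_eq_zero_of_le_abs hD0 hin, mul_zero, add_zero]
  · rw [NAC_eq_sum_Icc hA0, NAC_eq_sum_Icc hB0, NAC_eq_sum_Icc hC0, NAC_eq_sum_Icc hD0,
      Finset.mul_sum, Finset.mul_sum, ← Finset.sum_add_distrib, ← Finset.sum_add_distrib,
      ← Finset.sum_add_distrib]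
    exact h i (Finset.mem_Ioo.mpr (by cases abs_cases i <;> omega)) hi

set_option maxRecDepth 10000 in
/-- An explicit Turyn-type sequence `TT(38)`. -/
theorem exists_TT38 :
    IsTT 38
      (seqOfList [1, 1, 1, 1, -1, -1, 1, 1, 1, 1, 1, -1, 1, 1, 1, -1, -1, -1, 1, -1, 1, 1, -1, 1, 1, 1, 1, 1, -1, 1, 1, -1, -1, -1, -1, -1, -1, 1])
      (seqOfList [1, -1, 1, 1, 1, -1, -1, -1, -1, 1, 1, -1, 1, -1, 1, 1, -1, -1, -1, -1, -1, -1, -1, -1, 1, -1, -1, -1, 1, 1, 1, -1, 1, -1, 1, 1, -1, 1])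
      (seqOfList [1, 1, 1, -1, 1, -1, 1, 1, 1, 1, 1, -1, 1, 1, 1, -1, 1, -1, -1, -1, -1, 1, 1, 1, -1, 1, -1, -1, 1, -1, -1, 1, 1, 1, -1, 1, 1, -1])
      (seqOfList [1, -1, -1, 1, 1, -1, -1, -1, 1, 1, -1, -1, 1, 1, -1, 1, -1, -1, -1, -1, 1, -1, 1, -1, -1, -1, 1, -1, 1, 1, 1, 1, -1, 1, -1, -1, 1]) :=
  isTT_of_sum_Icc (isBinarySeq_seqOfList rfl (by decide)) (isBinarySeq_seqOfList rfl (by decide))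
    (isBinarySeq_seqOfList rfl (by decide)) (isBinarySeq_seqOfList rfl (by decide)) (by decide)
end
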